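/- arXiv:1607.08001 — 3 statements merged into one kernel-verified Lean document; each statement's English description precedes it below -/
import Mathlib

section
/- For k ∈ (0,1) with K = K(k), K' = K(√(1−k²)), the integral ∫_ℝ |x|ⁿ dx/(cos(√x·K) + cosh(√x·K')) is finite for every integer n ≥ 0. -/
open Real MeasureTheory

noncomputable def ellK (k : ℝ) : ℝ :=
  ∫ θ in (0:ℝ)..(π/2), 1 / Real.sqrt (1 - k^2 * Real.sin θ^2)

noncomputable def jacobiNome (k : ℝ) : ℝ :=
  Real.exp (-π * ellK (Real.sqrt (1 - k^2)) / ellK k)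

noncomputable def theta1 (z : ℂ) (q : ℝ) : ℂ :=
  2 * ∑' n : ℕ, (-1 : ℂ) ^ n * ((q ^ (((n : ℝ) + 1/2)^2) : ℝ) : ℂ) *
    Complex.sin ((2 * n + 1) * z)

noncomputable def theta2 (z : ℂ) (q : ℝ) : ℂ :=
  2 * ∑' n : ℕ, ((q ^ (((n : ℝ) + 1/2)^2) : ℝ) : ℂ) * Complex.cos ((2 * n + 1) * z)

noncomputable def theta3 (z : ℂ) (q : ℝ) : ℂ :=
  1 + 2 * ∑' n : ℕ, ((q ^ (((n : ℝ) + 1)^2) : ℝ) : ℂ) * Complex.cos (2 * ((n : ℂ) + 1) * z)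

noncomputable def theta4 (z : ℂ) (q : ℝ) : ℂ :=
  1 + 2 * ∑' n : ℕ, (-1 : ℂ) ^ (n + 1) * ((q ^ (((n : ℝ) + 1)^2) : ℝ) : ℂ) *
    Complex.cos (2 * ((n : ℂ) + 1) * z)

noncomputable def sn (u : ℂ) (k : ℝ) : ℂ :=
  (theta3 0 (jacobiNome k) / theta2 0 (jacobiNome k)) *
    (theta1 (π * u / (2 * ellK k)) (jacobiNome k) /
      theta4 (π * u / (2 * ellK k)) (jacobiNome k))

noncomputable def cn (u : ℂ) (k : ℝ) : ℂ :=
  (theta4 0 (jacobiNome k) / theta2 0 (jacobiNome k)) *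
    (theta2 (π * u / (2 * ellK k)) (jacobiNome k) /
      theta4 (π * u / (2 * ellK k)) (jacobiNome k))

noncomputable def dn (u : ℂ) (k : ℝ) : ℂ :=
  (theta4 0 (jacobiNome k) / theta3 0 (jacobiNome k)) *
    (theta3 (π * u / (2 * ellK k)) (jacobiNome k) /
      theta4 (π * u / (2 * ellK k)) (jacobiNome k))

noncomputable def cd (u : ℂ) (k : ℝ) : ℂ := cn u k / dn u k

noncomputable def mysteryDen (K K' x : ℝ) : ℝ :=
  if 0 ≤ x then Real.cos (Real.sqrt x * K) + Real.cosh (Real.sqrt x * K')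
  else Real.cosh (Real.sqrt (-x) * K) + Real.cos (Real.sqrt (-x) * K')

/-!
Both `K` and `K'` are positive, being integrals of positive functions. Writing
`m = min K K'`, each branch of `mysteryDen K K' x` is at least `cosh (√|x| * m) - 1`, and a single
term of the power series of `cosh` bounds this below by `(|x| * m ^ 2) ^ j / (2 * j)!` for every
`j ≥ 1`. Hence the continuous denominator is positive (it equals 2 at `x = 0`), and with
`j = n + 2` the integrand is `O((1 + x ^ 2)⁻¹)` at infinity.
-/

open Nat Filter

lemma ellK_pos {k : ℝ} (hk : k ^ 2 < 1) : 0 < ellK k := by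
  have hrad : ∀ θ, 0 < 1 - k ^ 2 * sin θ ^ 2 := fun θ => by
    nlinarith [sin_sq_le_one θ, sq_nonneg (k * sin θ)]
  have hcont : Continuous fun θ => 1 / √(1 - k ^ 2 * sin θ ^ 2) :=
    continuous_const.div (by fun_prop) fun θ => (sqrt_pos.2 (hrad θ)).ne'
  exact intervalIntegral.intervalIntegral_pos_of_pos_on (hcont.intervalIntegrable _ _)
    (fun θ _ => one_div_pos.2 (sqrt_pos.2 (hrad θ))) (half_pos pi_pos)

lemma one_add_pow_div_factorial_le_cosh (t : ℝ) {j : ℕ} (hj : j ≠ 0) :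
    1 + t ^ (2 * j) / (2 * j)! ≤ cosh t := by
  have hsum := sum_le_hasSum {0, j} (fun i _ =>
    div_nonneg ((even_two_mul i).pow_nonneg t) (Nat.cast_nonneg _)) (hasSum_cosh t)
  rwa [Finset.sum_pair hj.symm, mul_zero, pow_zero, Nat.factorial_zero, Nat.cast_one,
    div_one] at hsum

lemma cosh_mul_sub_one_le_cos_add_cosh_mul (a : ℝ) {s c b : ℝ} (hs : 0 ≤ s) (hc : 0 ≤ c)
    (hcb : c ≤ b) : cosh (s * c) - 1 ≤ cos a + cosh (s * b) := by
  have hcosh : cosh (s * c) ≤ cosh (s * b) := by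
    rw [cosh_le_cosh, abs_of_nonneg (by positivity), abs_of_nonneg (by nlinarith)]
    exact mul_le_mul_of_nonneg_left hcb hs
  linarith [neg_one_le_cos a]

lemma continuous_mysteryDen (K K' : ℝ) : Continuous (mysteryDen K K') :=
  Continuous.if_le (by fun_prop) (by fun_prop) continuous_const continuous_id fun x hx => by
    simp [← hx]

lemma pow_div_factorial_le_mysteryDen {K K' : ℝ} (hK : 0 ≤ K) (hK' : 0 ≤ K') (x : ℝ)
    {j : ℕ} (hj : j ≠ 0) :
    (|x| * min K K' ^ 2) ^ j / (2 * j)! ≤ mysteryDen K K' x := by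
  have hmin : 0 ≤ min K K' := le_min hK hK'
  have hpow : (|x| * min K K' ^ 2) ^ j = (√|x| * min K K') ^ (2 * j) := by
    rw [pow_mul, mul_pow √|x|, sq_sqrt (abs_nonneg x)]
  have hcosh := one_add_pow_div_factorial_le_cosh (√|x| * min K K') hj
  rw [hpow]
  suffices cosh (√|x| * min K K') - 1 ≤ mysteryDen K K' x by linarith
  unfold mysteryDen
  split_ifs with hx
  · rw [abs_of_nonneg hx]
    exact cosh_mul_sub_one_le_cos_add_cosh_mul _ (sqrt_nonneg x) hmin (min_le_right K K')
  · rw [abs_of_neg (not_le.1 hx), add_comm (cosh _)]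
    exact cosh_mul_sub_one_le_cos_add_cosh_mul _ (sqrt_nonneg (-x)) hmin (min_le_left K K')

lemma mysteryDen_pos {K K' : ℝ} (hK : 0 < K) (hK' : 0 < K') (x : ℝ) :
    0 < mysteryDen K K' x := by
  rcases eq_or_ne x 0 with rfl | hx
  · simp [mysteryDen]
  · have hm : 0 < min K K' := lt_min hK hK'
    exact lt_of_lt_of_le (by positivity)
      (pow_div_factorial_le_mysteryDen hK.le hK'.le x one_ne_zero)

lemma abs_pow_div_mysteryDen_le {K K' : ℝ} (hK : 0 < K) (hK' : 0 < K') (n : ℕ) {x : ℝ}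
    (hx : 1 ≤ |x|) :
    |x| ^ n / mysteryDen K K' x ≤
      2 * (2 * (n + 2))! / min K K' ^ (2 * (n + 2)) * (1 + x ^ 2)⁻¹ := by
  have hm : 0 < min K K' := lt_min hK hK'
  have hden := pow_div_factorial_le_mysteryDen hK.le hK'.le x (j := n + 2) (by omega)
  have hx2 : 1 ≤ x ^ 2 := by nlinarith [sq_abs x]
  rw [div_le_iff₀ (mysteryDen_pos hK hK' x)]
  calc |x| ^ n ≤ 2 * |x| ^ (n + 2) / (1 + x ^ 2) := by
        rw [le_div_iff₀ (by positivity), pow_add, sq_abs]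
        nlinarith [pow_nonneg (abs_nonneg x) n]
    _ = 2 * (2 * (n + 2))! / min K K' ^ (2 * (n + 2)) * (1 + x ^ 2)⁻¹ *
          ((|x| * min K K' ^ 2) ^ (n + 2) / (2 * (n + 2))!) := by
        field_simp
        ring
    _ ≤ _ := by gcongr

lemma isBigO_cocompact_abs_pow_div_mysteryDen {K K' : ℝ} (hK : 0 < K) (hK' : 0 < K')
    (n : ℕ) :
    (fun x => |x| ^ n / mysteryDen K K' x) =O[cocompact ℝ] fun x => (1 + x ^ 2)⁻¹ := by
  refine Asymptotics.IsBigO.of_bound (2 * (2 * (n + 2))! / min K K' ^ (2 * (n + 2)))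
    ((tendsto_norm_cocompact_atTop.eventually_ge_atTop 1).mono fun x hx => ?_)
  rw [norm_of_nonneg (div_nonneg (by positivity) (mysteryDen_pos hK hK' x).le),
    norm_of_nonneg (by positivity)]
  exact abs_pow_div_mysteryDen_le hK hK' n hx

theorem mystery_moments_integrable (k : ℝ) (hk : k ∈ Set.Ioo (0:ℝ) 1)
    (K K' : ℝ) (hK : K = ellK k) (hK' : K' = ellK (Real.sqrt (1 - k^2)))
    (n : ℕ) :
    MeasureTheory.Integrable (fun x : ℝ => |x| ^ n / mysteryDen K K' x) := by
  obtain ⟨hk0, hk1⟩ := hk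
  have hKpos : 0 < K := hK ▸ ellK_pos (by nlinarith)
  have hK'pos : 0 < K' := hK' ▸ ellK_pos (by rw [sq_sqrt (by nlinarith)]; nlinarith)
  have hcont : Continuous fun x : ℝ => |x| ^ n / mysteryDen K K' x :=
    (continuous_abs.pow n).div (continuous_mysteryDen K K') fun x =>
      (mysteryDen_pos hKpos hK'pos x).ne'
  exact hcont.locallyIntegrable.integrable_of_isBigO_cocompact
    (isBigO_cocompact_abs_pow_div_mysteryDen hKpos hK'pos n)
    (integrable_inv_one_add_sq.integrableAtFilter _)
end

section
/- Define f(z) = sin(vz(1+τ))/(cos(z(1+τ))·cos(z(1−τ))) for fixed v ∈ (−1,1) and τ = iK'/K, K,K' > 0. Then along the contour L = {iy : y ≥ 0} ∪ {x : x ≥ 0}, f(z) decays exponentially: there exist constants C, c > 0 such that |f(z)| ≤ C·exp(−c|z|) for all z ∈ L with |z| sufficiently large. -/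
/-!
On either ray, with `τ = t i`, the arguments of the two cosines have imaginary parts of the same
absolute value `s ≥ |z| min t 1`, and the argument of the sine has imaginary part `|v| s`.
Since `‖sin w‖ ≤ exp |Im w|` and `‖cos w‖ ≥ sinh |Im w| ≥ exp |Im w| / 4` once `|Im w| ≥ 1`,
`‖f z‖ ≤ 16 exp (-(2 - |v|) s)`, and `2 - |v| > 0`.
-/

namespace Complex

lemma norm_exp_mul_I (z : ℂ) : ‖exp (z * I)‖ = Real.exp (-z.im) := by simp [norm_exp]

lemma norm_exp_neg_mul_I (z : ℂ) : ‖exp (-z * I)‖ = Real.exp z.im := by simp [norm_exp]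

lemma norm_sin_le_exp_abs_im (z : ℂ) : ‖sin z‖ ≤ Real.exp |z.im| := by
  have h : 2 * ‖sin z‖ ≤ Real.exp z.im + Real.exp (-z.im) := by
    rw [← Complex.norm_two, ← norm_mul, two_sin, norm_mul, norm_I, mul_one,
      ← norm_exp_mul_I, ← norm_exp_neg_mul_I]
    exact norm_sub_le _ _
  have := Real.exp_le_exp.2 (le_abs_self z.im)
  have := Real.exp_le_exp.2 (neg_le_abs z.im)
  linarith

lemma sinh_abs_im_le_norm_cos (z : ℂ) : Real.sinh |z.im| ≤ ‖cos z‖ := by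
  have h : |Real.exp (-z.im) - Real.exp z.im| ≤ 2 * ‖cos z‖ := by
    rw [← Complex.norm_two, ← norm_mul, two_cos, ← sub_neg_eq_add,
      ← norm_exp_mul_I, ← norm_exp_neg_mul_I, ← norm_neg (exp (-z * I))]
    exact abs_norm_sub_norm_le _ _
  rw [← Real.abs_sinh, Real.sinh_eq, abs_div, abs_two, ← abs_neg, neg_sub]
  linarith

end Complex

lemma Real.exp_div_four_le_sinh {x : ℝ} (hx : 1 ≤ x) : exp x / 4 ≤ sinh x := by
  have h2 : 2 ≤ exp x := by linarith [add_one_le_exp x]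
  have h : exp (-x) * exp x = 1 := by rw [← exp_add, neg_add_cancel, exp_zero]
  rw [sinh_eq]
  nlinarith [exp_pos (-x)]

open Complex in
lemma norm_sin_div_cos_mul_cos_le {a s : ℝ} (hs : 1 ≤ s) {w₁ w₂ w₃ : ℂ} (h₁ : |w₁.im| ≤ a * s)
    (h₂ : s ≤ |w₂.im|) (h₃ : s ≤ |w₃.im|) :
    ‖sin w₁ / (cos w₂ * cos w₃)‖ ≤ 16 * Real.exp (-(2 - a) * s) := by
  have hcos {w : ℂ} (hw : s ≤ |w.im|) : Real.exp s / 4 ≤ ‖cos w‖ :=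
    calc Real.exp s / 4 ≤ Real.sinh s := Real.exp_div_four_le_sinh hs
      _ ≤ Real.sinh |w.im| := Real.sinh_le_sinh.2 hw
      _ ≤ ‖cos w‖ := sinh_abs_im_le_norm_cos w
  have hsin : ‖sin w₁‖ ≤ Real.exp (a * s) :=
    (norm_sin_le_exp_abs_im w₁).trans (Real.exp_le_exp.2 h₁)
  have hs4 : 0 < Real.exp s / 4 := by positivity
  calc ‖sin w₁ / (cos w₂ * cos w₃)‖ = ‖sin w₁‖ / (‖cos w₂‖ * ‖cos w₃‖) := by
        rw [norm_div, norm_mul]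
    _ ≤ Real.exp (a * s) / (Real.exp s / 4 * (Real.exp s / 4)) := by
        gcongr
        exacts [hcos h₂, hcos h₃]
    _ = 16 * Real.exp (-(2 - a) * s) := by
        rw [div_eq_iff (by positivity), show a * s = -(2 - a) * s + s + s by ring,
          Real.exp_add, Real.exp_add]
        ring

open Complex in
lemma exists_abs_im_eq_of_mem_axes {t y : ℝ} (ht : 0 < t) (hy : 0 ≤ y) {z : ℂ}
    (hz : z = y ∨ z = y * I) (v : ℝ) :
    ∃ s, y * min t 1 ≤ s ∧ |(v * z * (1 + t * I)).im| = |v| * s ∧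
      |(z * (1 + t * I)).im| = s ∧ |(z * (1 - t * I)).im| = s := by
  rcases hz with rfl | rfl
  · refine ⟨y * t, by gcongr; exact min_le_left t 1, ?_, ?_, ?_⟩ <;>
      simp [abs_mul, abs_of_nonneg hy, abs_of_pos ht, mul_assoc]
  · refine ⟨y, by nlinarith [min_le_right t 1], ?_, ?_, ?_⟩ <;>
      simp [abs_mul, abs_of_nonneg hy]

theorem integrand_exponential_decay (K K' : ℝ) (hK : 0 < K) (hK' : 0 < K')
    (τ : ℂ) (hτ : τ = Complex.I * K' / K) (v : ℝ) (hv : v ∈ Set.Ioo (-1 : ℝ) 1)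
    (f : ℂ → ℂ)
    (hf : f = fun z => Complex.sin (v * z * (1 + τ)) /
      (Complex.cos (z * (1 + τ)) * Complex.cos (z * (1 - τ)))) :
    ∃ C c R : ℝ, 0 < C ∧ 0 < c ∧
      ∀ z : ℂ, (∃ y : ℝ, 0 ≤ y ∧ (z = y ∨ z = y * Complex.I)) →
        R ≤ ‖z‖ →
        ‖f z‖ ≤ C * Real.exp (-c * ‖z‖) := by
  obtain ⟨t, ht, hτt⟩ : ∃ t : ℝ, 0 < t ∧ τ = t * Complex.I :=
    ⟨K' / K, div_pos hK' hK, by rw [hτ]; push_cast; ring⟩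
  have hv2 : 0 < 2 - |v| := by linarith [abs_lt.2 hv]
  have hm : 0 < min t 1 := lt_min ht one_pos
  refine ⟨16, (2 - |v|) * min t 1, 1 / min t 1, by norm_num, mul_pos hv2 hm, ?_⟩
  rintro z ⟨y, hy, hz⟩ hR
  have hzy : ‖z‖ = y := by rcases hz with rfl | rfl <;> simp [abs_of_nonneg hy]
  obtain ⟨s, hys, h₁, h₂, h₃⟩ := exists_abs_im_eq_of_mem_axes ht hy hz v
  have hs : 1 ≤ s := by
    rw [hzy, div_le_iff₀ hm] at hR
    linarith
  subst hf hτt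
  calc _ ≤ 16 * Real.exp (-(2 - |v|) * s) :=
        norm_sin_div_cos_mul_cos_le hs h₁.le h₂.ge h₃.ge
    _ ≤ 16 * Real.exp (-((2 - |v|) * min t 1) * ‖z‖) := by
        rw [hzy]
        gcongr 16 * Real.exp ?_
        nlinarith
end

section
/- Let t ∈ ℝ, γ > 0, k ∈ (0,1), k' = √(1−k²), K = K(k), K' = K(k'). Define D(x) = −(4/π) sin(√x K/2) sinh(√x K'/2) and B(x) = (2/π) ln(k/k') sin(√x K/2) sinh(√x K'/2) + cos(√x K/2) cosh(√x K'/2). If C = (2/π)ln(k/k'), γ* = 4/(π(1+C²)), t* = −Cγ*, then for all real x: (γ*/π)/((D(x)−t*B(x))² + (γ*)²B(x)²) = (1/2)/(cos(√x K) + cosh(√x K')). -/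
open Real

/-- The real-valued function `sin(√x K/2)·sinh(√x K'/2)`, where for `x < 0`
one takes `√x = i√(-x)` (so that the product is again real). -/
noncomputable def sinSinh (K K' x : ℝ) : ℝ :=
  if 0 ≤ x then Real.sin (Real.sqrt x * K / 2) * Real.sinh (Real.sqrt x * K' / 2)
  else -(Real.sinh (Real.sqrt (-x) * K / 2) * Real.sin (Real.sqrt (-x) * K' / 2))

/-- The real-valued function `cos(√x K/2)·cosh(√x K'/2)`, where for `x < 0`
one takes `√x = i√(-x)`. -/
noncomputable def cosCosh (K K' x : ℝ) : ℝ :=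
  if 0 ≤ x then Real.cos (Real.sqrt x * K / 2) * Real.cosh (Real.sqrt x * K' / 2)
  else Real.cosh (Real.sqrt (-x) * K / 2) * Real.cos (Real.sqrt (-x) * K' / 2)

/-!
With `s = sin(√x K/2) sinh(√x K'/2)` and `c = cos(√x K/2) cosh(√x K'/2)`, the double-angle
formulas give `cos(√x K) + cosh(√x K') = 2 (s² + c²)`. Since `4/π = γ* (1 + C²)`, one has
`D - t* B = γ* (C c - s)`, so the denominator on the left is
`γ*² ((C c - s)² + (C s + c)²) = γ*² (1 + C²) (s² + c²)`, and `γ* π (1 + C²) = 4`.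
-/

theorem cos_two_mul_add_cosh_two_mul (a b : ℝ) :
    cos (2 * a) + cosh (2 * b) = 2 * ((sin a * sinh b) ^ 2 + (cos a * cosh b) ^ 2) := by
  rw [cos_two_mul, cosh_two_mul]
  linear_combination (-2 * sinh b ^ 2) * sin_sq_add_cos_sq a
    + (1 - 2 * cos a ^ 2) * cosh_sq_sub_sinh_sq b

theorem mysteryDen_eq_two_mul (K K' x : ℝ) :
    mysteryDen K K' x = 2 * (sinSinh K K' x ^ 2 + cosCosh K K' x ^ 2) := by
  unfold mysteryDen sinSinh cosCosh
  split_ifs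
  · have := cos_two_mul_add_cosh_two_mul (√x * K / 2) (√x * K' / 2)
    rwa [mul_div_cancel₀ _ two_ne_zero, mul_div_cancel₀ _ two_ne_zero] at this
  · have := cos_two_mul_add_cosh_two_mul (√(-x) * K' / 2) (√(-x) * K / 2)
    rw [mul_div_cancel₀ _ two_ne_zero, mul_div_cancel₀ _ two_ne_zero] at this
    linear_combination this

theorem nevanlinna_weight_eq_mystery_density_general
    (k : ℝ)
    (k' K K' : ℝ)
    (D B : ℝ → ℝ)
    (hD : D = fun x => -(4 / π) * sinSinh K K' x)
    (hB : B = fun x => (2 / π) * Real.log (k / k') * sinSinh K K' x + cosCosh K K' x)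
    (C γs ts : ℝ)
    (hC : C = (2 / π) * Real.log (k / k'))
    (hγs : γs = 4 / (π * (1 + C^2)))
    (hts : ts = -C * γs) :
    ∀ x : ℝ,
      (γs / π) / ((D x - ts * B x)^2 + γs^2 * (B x)^2) =
        (1/2) / mysteryDen K K' x := by
  intro x
  rw [mysteryDen_eq_two_mul]
  set s := sinSinh K K' x
  set c := cosCosh K K' x
  have hC2 : 0 < 1 + C ^ 2 := by positivity
  have h4π : 4 / π = γs * (1 + C ^ 2) := by rw [hγs]; field_simp
  have hden : (D x - ts * B x) ^ 2 + γs ^ 2 * B x ^ 2 = γs ^ 2 * (1 + C ^ 2) * (s ^ 2 + c ^ 2) := by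
    simp only [hD, hB, ← hC, hts, h4π]
    ring
  have hγs_div : γs / π / (γs ^ 2 * (1 + C ^ 2)) = 1 / 4 := by
    rw [hγs]; field_simp
  rw [hden, ← div_div, hγs_div, ← div_div]
  norm_num

theorem nevanlinna_weight_eq_mystery_density
    (t γ : ℝ) (hγ : 0 < γ) (k : ℝ) (hk : k ∈ Set.Ioo (0:ℝ) 1)
    (k' K K' : ℝ) (hk' : k' = Real.sqrt (1 - k^2)) (hK : K = ellK k) (hK' : K' = ellK k')
    (D B : ℝ → ℝ)
    (hD : D = fun x => -(4 / π) * sinSinh K K' x)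
    (hB : B = fun x => (2 / π) * Real.log (k / k') * sinSinh K K' x + cosCosh K K' x)
    (C γs ts : ℝ)
    (hC : C = (2 / π) * Real.log (k / k'))
    (hγs : γs = 4 / (π * (1 + C^2)))
    (hts : ts = -C * γs) :
    ∀ x : ℝ,
      (γs / π) / ((D x - ts * B x)^2 + γs^2 * (B x)^2) =
        (1/2) / mysteryDen K K' x :=
  nevanlinna_weight_eq_mystery_density_general k k' K K' D B hD hB C γs ts hC hγs hts
end
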